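/- For the map f(x,y,z,ω) = (y, g(x)+h(z), ω, g̃(x)−h(z)) on ℝ⁴, the even-index iterates decouple: for all n ∈ ℕ, there exist functions F⁽²ⁿ⁾, G⁽²ⁿ⁾ : ℝ² → ℝ such that the orbit (xₖ,yₖ,zₖ,ωₖ) = f^k(x₀,y₀,z₀,ω₀) satisfies x_{2n} = F⁽²ⁿ⁾(x₀,z₀), y_{2n} = F⁽²ⁿ⁾(y₀,ω₀), z_{2n} = G⁽²ⁿ⁾(x₀,z₀), ω_{2n} = G⁽²ⁿ⁾(y₀,ω₀). -/

import Mathlib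

/-!
Two steps of `f` act on the pairs `(x, z)` and `(y, w)` separately, each by the same planar map
`φ (x, z) = (g x + h z, g̃ x - h z)`: in the interleaved coordinates `((x, z), (y, w))` the square
`f²` is `φ × φ`. Hence `f^[2n]` is `φ^[n] × φ^[n]`, and `F⁽²ⁿ⁾`, `G⁽²ⁿ⁾` are the two components
of `φ^[n]`.
-/

open Function

section Interleave

variable {α : Type*}

def interleave (p : (α × α) × (α × α)) : α × α × α × α :=
  (p.1.1, p.2.1, p.1.2, p.2.2)

theorem semiconj_interleave_iterate_two {f : α × α × α × α → α × α × α × α}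
    {φ : α × α → α × α} (hf : ∀ x y z w, f (x, y, z, w) = (y, (φ (x, z)).1, w, (φ (x, z)).2)) :
    Semiconj interleave (Prod.map φ φ) f^[2] := by
  rintro ⟨⟨x, z⟩, ⟨y, w⟩⟩
  simp only [iterate_succ, iterate_zero, comp_apply, id_eq, interleave, Prod.map, hf]

theorem iterate_two_mul_interleave {f : α × α × α × α → α × α × α × α}
    {φ : α × α → α × α} (hf : ∀ x y z w, f (x, y, z, w) = (y, (φ (x, z)).1, w, (φ (x, z)).2))
    (n : ℕ) (p q : α × α) :
    f^[2 * n] (interleave (p, q)) = interleave (φ^[n] p, φ^[n] q) := by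
  have h := (semiconj_interleave_iterate_two hf).iterate_right n (p, q)
  rw [Prod.map_iterate, ← iterate_mul] at h
  exact h.symm

end Interleave

/-- Even-index iterates of the map decouple into functions `F⁽²ⁿ⁾`, `G⁽²ⁿ⁾` of the
pairs `(x₀, z₀)` and `(y₀, ω₀)`. -/
theorem even_iterates_decouple
    (g gt h : ℝ → ℝ)
    (f : ℝ × ℝ × ℝ × ℝ → ℝ × ℝ × ℝ × ℝ)
    (hf : ∀ x y z w : ℝ, f (x, y, z, w) = (y, g x + h z, w, gt x - h z))
    (n : ℕ) :
    ∃ F G : ℝ × ℝ → ℝ, ∀ x₀ y₀ z₀ w₀ : ℝ,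
      f^[2 * n] (x₀, y₀, z₀, w₀) =
        (F (x₀, z₀), F (y₀, w₀), G (x₀, z₀), G (y₀, w₀)) := by
  set φ : ℝ × ℝ → ℝ × ℝ := fun p => (g p.1 + h p.2, gt p.1 - h p.2)
  refine ⟨fun p => (φ^[n] p).1, fun p => (φ^[n] p).2, fun x₀ y₀ z₀ w₀ => ?_⟩
  exact iterate_two_mul_interleave hf n (x₀, z₀) (y₀, w₀)
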